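/- arXiv:1410.2654 — 2 statements merged into one kernel-verified Lean document; each statement's English description precedes it below -/
import Mathlib

section
/- (Arbitrarily slow convergence of FDRS.) Let a ≥ 0. For every function F : ℝ₊ → (0,1) that is strictly decreasing to zero and satisfies {1/(j+1) : j ∈ ℕ, j ≥ 1} ⊆ range(F), there exist a sequence of angles (θ_i)_{i≥0} ⊆ (0, π/2] and a point z⁰ ∈ H such that, with T the associated block operator: (i) U ∩ V = {0}; (ii) 0 is the unique fixed point of T; (iii) the iterates z^{k+1} := T(z^k) converge strongly (in norm) to 0; and (iv) ‖z^k‖ ≥ e^{−1}F(k) for all k ≥ 1. -/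
/-!
The FDRS operator is block diagonal with rank-one blocks `v ↦ v 1 • w`, where `w` is the second
column of the block matrix and `w 1 = b = (cos² θ + a) / (a + 1)`. Hence the `k`-th iterate of
`z` has `i`-th block `b_i ^ (k-1) • (z i 1 • w_i)`: each block dies out since `b_i < 1`, and the
whole orbit converges by dominated convergence on `ℓ²`. The rate `b_i` is at least `cos² θ_i`.
Pick `x_j` with `F x_j = 1 / (j + 2)` and choose `cos² θ_j = exp (-1 / (x_j + 1))`, so that
`b_j ^ k ≥ e⁻¹` for `k ≤ x_j + 1`. Starting from `z⁰` with blocks `(0, 1 / (j + 1))`, for every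
`k` the index `j` with `1 / (j + 2) < F k ≤ 1 / (j + 1)` has `k < x_j`, so the `j`-th block of
the `k`-th iterate alone has norm at least `e⁻¹ / (j + 1) ≥ e⁻¹ F k`.
-/

open Filter

/-- The Hilbert space ℓ²(ℕ; ℝ²). -/
abbrev SlowH : Type := lp (fun _ : ℕ => EuclideanSpace ℝ (Fin 2)) 2

open Real Topology Set

namespace lp

variable {ι 𝕜 : Type*} [NormedField 𝕜] {E : ι → Type*} [∀ i, NormedAddCommGroup (E i)]
  [∀ i, NormedSpace 𝕜 (E i)] {p : ENNReal} [Fact (1 ≤ p)]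

theorem tendsto_zero_of_dominated {α : Type*} {l : Filter α} (hp : p ≠ ⊤) {f : α → lp E p}
    (g : lp E p) (hfg : ∀ n i, ‖f n i‖ ≤ ‖g i‖) (hf : ∀ i, Tendsto (fun n => f n i) l (𝓝 0)) :
    Tendsto f l (𝓝 0) := by
  have hp0 : 0 < p.toReal := ENNReal.toReal_pos (zero_lt_one.trans_le Fact.out).ne' hp
  have hsum : Tendsto (fun n => ‖f n‖ ^ p.toReal) l (𝓝 0) := by
    simp_rw [lp.norm_rpow_eq_tsum hp0]
    simpa using tendsto_tsum_of_dominated_convergence (g := fun _ => (0 : ℝ))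
      ((lp.memℓp g).summable hp0)
      (fun i => by simpa [hp0.ne'] using (hf i).norm.rpow_const (Or.inr hp0.le))
      (Eventually.of_forall fun n i => by
        rw [Real.norm_of_nonneg (by positivity)]
        exact Real.rpow_le_rpow (norm_nonneg _) (hfg n i) hp0.le)
  rw [tendsto_zero_iff_norm_tendsto_zero]
  have := hsum.rpow_const (p := p.toReal⁻¹) (Or.inr (inv_nonneg.2 hp0.le))
  rw [Real.zero_rpow (inv_ne_zero hp0.ne')] at this
  exact this.congr fun n => Real.rpow_rpow_inv (norm_nonneg _) hp0.ne'

variable (M : ∀ i, E i →L[𝕜] E i) (hM : ∀ i v, ‖M i v‖ ≤ ‖v‖)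

noncomputable def diagonal : lp E p →L[𝕜] lp E p :=
  LinearMap.mkContinuous
    { toFun f := ⟨fun i => M i (f i), (lp.memℓp f).mono' fun i => hM i (f i)⟩
      map_add' f g := lp.ext <| funext fun i => (M i).map_add _ _
      map_smul' c f := lp.ext <| funext fun i => (M i).map_smul _ _ }
    1 fun f => by
      simpa using lp.norm_mono (zero_lt_one.trans_le Fact.out).ne' fun i => hM i (f i)

theorem diagonal_apply (f : lp E p) (i : ι) : diagonal M hM f i = M i (f i) := rfl

theorem diagonal_iterate_apply (k : ℕ) (f : lp E p) (i : ι) :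
    (diagonal M hM)^[k] f i = (M i)^[k] (f i) := by
  induction k with
  | zero => rfl
  | succ k ih => simp only [Function.iterate_succ_apply', diagonal_apply, ih]

theorem tendsto_diagonal_iterate (hp : p ≠ ⊤)
    (h : ∀ i v, Tendsto (fun k => (M i)^[k] v) atTop (𝓝 0)) (f : lp E p) :
    Tendsto (fun k => (diagonal M hM)^[k] f) atTop (𝓝 0) := by
  refine tendsto_zero_of_dominated hp f (fun k i => ?_) fun i => ?_
  · rw [diagonal_iterate_apply]
    induction k with
    | zero => rfl
    | succ k ih => exact (Function.iterate_succ_apply' (M i) k _).symm ▸ (hM i _).trans ih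
  · simpa only [diagonal_iterate_apply] using h i (f i)

end lp

noncomputable def fdrsRate (a θ : ℝ) : ℝ := (cos θ ^ 2 + a) / (a + 1)

-- The first column of the FDRS block matrix vanishes, so the block is `v ↦ v 1 • fdrsColumn a θ`.
noncomputable def fdrsColumn (a θ : ℝ) : EuclideanSpace ℝ (Fin 2) :=
  !₂[-(sin θ * cos θ / (a + 1)), fdrsRate a θ]

noncomputable def fdrsBlock (a θ : ℝ) : EuclideanSpace ℝ (Fin 2) →L[ℝ] EuclideanSpace ℝ (Fin 2) :=
  (EuclideanSpace.proj 1).smulRight (fdrsColumn a θ)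

section fdrsBlock

variable {a θ : ℝ}

theorem fdrsBlock_apply (v : EuclideanSpace ℝ (Fin 2)) : fdrsBlock a θ v = v 1 • fdrsColumn a θ :=
  rfl

theorem fdrsBlock_apply_zero (v : EuclideanSpace ℝ (Fin 2)) :
    fdrsBlock a θ v 0 = -(sin θ * cos θ / (a + 1)) * v 1 := by
  simp [fdrsBlock_apply, fdrsColumn, mul_comm]

theorem fdrsBlock_apply_one (v : EuclideanSpace ℝ (Fin 2)) :
    fdrsBlock a θ v 1 = fdrsRate a θ * v 1 := by
  simp [fdrsBlock_apply, fdrsColumn, mul_comm]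

theorem fdrsRate_nonneg (ha : 0 ≤ a) : 0 ≤ fdrsRate a θ := by
  unfold fdrsRate; positivity

theorem fdrsRate_lt_one (ha : 0 ≤ a) (hθ : sin θ ≠ 0) : fdrsRate a θ < 1 := by
  rw [fdrsRate, div_lt_one (by linarith)]
  nlinarith [sin_sq_add_cos_sq θ, sq_pos_of_ne_zero hθ]

theorem cos_sq_le_fdrsRate (ha : 0 ≤ a) : cos θ ^ 2 ≤ fdrsRate a θ := by
  rw [fdrsRate, le_div_iff₀ (by linarith)]
  nlinarith [cos_sq_le_one θ]

theorem norm_fdrsBlock_apply_le (ha : 0 ≤ a) (v : EuclideanSpace ℝ (Fin 2)) :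
    ‖fdrsBlock a θ v‖ ≤ ‖v‖ := by
  have hw : ‖fdrsColumn a θ‖ ≤ 1 := by
    rw [← sq_le_one_iff₀ (norm_nonneg _), EuclideanSpace.real_norm_sq_eq, Fin.sum_univ_two]
    simp only [fdrsColumn, fdrsRate, PiLp.toLp_apply, Matrix.cons_val_zero, Matrix.cons_val_one]
    rw [neg_sq, div_pow, div_pow, ← add_div, div_le_one (by positivity)]
    nlinarith [sin_sq_add_cos_sq θ, cos_sq_le_one θ]
  calc ‖fdrsBlock a θ v‖ = ‖v 1‖ * ‖fdrsColumn a θ‖ := by rw [fdrsBlock_apply, norm_smul]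
    _ ≤ ‖v‖ * 1 := mul_le_mul (PiLp.norm_apply_le v 1) hw (norm_nonneg _) (norm_nonneg _)
    _ = ‖v‖ := mul_one _

theorem fdrsBlock_iterate_apply_one (k : ℕ) (v : EuclideanSpace ℝ (Fin 2)) :
    ((fdrsBlock a θ)^[k] v) 1 = fdrsRate a θ ^ k * v 1 := by
  induction k with
  | zero => simp
  | succ k ih => rw [Function.iterate_succ_apply', fdrsBlock_apply_one, ih, pow_succ]; ring

theorem fdrsBlock_iterate_succ_apply (k : ℕ) (v : EuclideanSpace ℝ (Fin 2)) :
    (fdrsBlock a θ)^[k + 1] v = fdrsRate a θ ^ k • fdrsBlock a θ v := by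
  rw [Function.iterate_succ_apply', fdrsBlock_apply, fdrsBlock_iterate_apply_one, fdrsBlock_apply,
    smul_smul]

theorem tendsto_fdrsBlock_iterate (ha : 0 ≤ a) (hθ : sin θ ≠ 0) (v : EuclideanSpace ℝ (Fin 2)) :
    Tendsto (fun k => (fdrsBlock a θ)^[k] v) atTop (𝓝 0) := by
  rw [← tendsto_add_atTop_iff_nat 1]
  simp_rw [fdrsBlock_iterate_succ_apply]
  simpa using (tendsto_pow_atTop_nhds_zero_of_lt_one (fdrsRate_nonneg ha)
    (fdrsRate_lt_one ha hθ)).smul_const (fdrsBlock a θ v)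

end fdrsBlock

noncomputable def fdrsOperator (a : ℝ) (ha : 0 ≤ a) (θ : ℕ → ℝ) : SlowH →L[ℝ] SlowH :=
  lp.diagonal (fun i => fdrsBlock a (θ i)) fun _ => norm_fdrsBlock_apply_le ha

namespace SlowH

theorem eq_zero_of_forall_apply_eq_zero {z : SlowH} (h₀ : ∀ i, z i 0 = 0) (h₁ : ∀ i, z i 1 = 0) :
    z = 0 := by
  ext i t
  fin_cases t
  exacts [h₀ i, h₁ i]

theorem eq_zero_of_mem_U_of_mem_V {θ : ℕ → ℝ} (hθ : ∀ i, sin (θ i) ≠ 0) {z : SlowH}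
    (hU : ∀ i, ∃ r : ℝ, z i 0 = r * cos (θ i) ∧ z i 1 = r * sin (θ i)) (hV : ∀ i, z i 1 = 0) :
    z = 0 := by
  refine eq_zero_of_forall_apply_eq_zero (fun i => ?_) hV
  obtain ⟨r, hr₀, hr₁⟩ := hU i
  have hr : r = 0 := by simpa [hV i, hθ i, eq_comm] using hr₁
  rw [hr₀, hr, zero_mul]

end SlowH

section fdrsOperator

variable {a : ℝ} (ha : 0 ≤ a) {θ : ℕ → ℝ}

theorem fdrsOperator_apply (z : SlowH) (i : ℕ) :
    fdrsOperator a ha θ z i = fdrsBlock a (θ i) (z i) :=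
  rfl

theorem eq_zero_of_fdrsOperator_apply_eq_self (hθ : ∀ i, sin (θ i) ≠ 0) {z : SlowH}
    (hz : fdrsOperator a ha θ z = z) : z = 0 := by
  have h₁ (i : ℕ) : z i 1 = 0 := by
    have h := congr_arg (fun z : SlowH => z i 1) hz
    simp only [fdrsOperator_apply, fdrsBlock_apply_one] at h
    have := fdrsRate_lt_one ha (hθ i)
    nlinarith
  refine SlowH.eq_zero_of_forall_apply_eq_zero (fun i => ?_) h₁
  rw [← hz, fdrsOperator_apply, fdrsBlock_apply_zero, h₁, mul_zero]

theorem tendsto_fdrsOperator_iterate (hθ : ∀ i, sin (θ i) ≠ 0) (z : SlowH) :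
    Tendsto (fun k => (fdrsOperator a ha θ)^[k] z) atTop (𝓝 0) :=
  lp.tendsto_diagonal_iterate _ _ ENNReal.ofNat_ne_top
    (fun i => tendsto_fdrsBlock_iterate ha (hθ i)) z

end fdrsOperator

noncomputable def harmonicPoint : SlowH :=
  ⟨fun j => EuclideanSpace.single 1 (1 / ((j : ℝ) + 1)), by
    refine (memℓp_gen_iff (by norm_num)).2 ?_
    simpa [PiLp.norm_single, Real.rpow_two, div_pow] using
      (Real.summable_one_div_nat_add_rpow 1 2).2 one_lt_two⟩

theorem fdrsOperator_iterate_harmonicPoint_apply_one {a : ℝ} (ha : 0 ≤ a) (θ : ℕ → ℝ) (k j : ℕ) :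
    (fdrsOperator a ha θ)^[k] harmonicPoint j 1 = fdrsRate a (θ j) ^ k * (1 / ((j : ℝ) + 1)) := by
  rw [fdrsOperator, lp.diagonal_iterate_apply, fdrsBlock_iterate_apply_one]
  simp [harmonicPoint]

noncomputable def slowAngle (R : ℝ) : ℝ := arccos (exp (-(1 / (2 * R))))

theorem cos_slowAngle_sq {R : ℝ} (hR : 0 ≤ R) : cos (slowAngle R) ^ 2 = exp (-(1 / R)) := by
  rw [slowAngle, cos_arccos (by linarith [exp_pos (-(1 / (2 * R)))])
    (exp_le_one_iff.2 (by simp; positivity)), ← exp_nat_mul]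
  push_cast
  ring_nf

theorem slowAngle_mem_Ioc {R : ℝ} (hR : 0 < R) : slowAngle R ∈ Ioc 0 (π / 2) :=
  ⟨arccos_pos.2 (exp_lt_one_iff.2 (by simp; positivity)), arccos_le_pi_div_two.2 (exp_pos _).le⟩

theorem exp_neg_one_le_fdrsRate_pow {a θ R : ℝ} (ha : 0 ≤ a) (hR : 0 < R)
    (hθ : cos θ ^ 2 = exp (-(1 / R))) {k : ℕ} (hk : k ≤ R) : exp (-1) ≤ fdrsRate a θ ^ k :=
  calc exp (-1) ≤ exp (-(1 / R)) ^ k := by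
        rw [← exp_nat_mul, exp_le_exp, mul_neg, mul_one_div, neg_le_neg_iff]
        exact (div_le_one hR).2 hk
    _ ≤ fdrsRate a θ ^ k := by
        rw [← hθ]; exact pow_le_pow_left₀ (sq_nonneg _) (cos_sq_le_fdrsRate ha) k

theorem StrictAntiOn.exists_le_one_div_succ_and_lt {F : ℝ → ℝ} (hF : StrictAntiOn F (Ici 0))
    {x : ℕ → ℝ} (hx₀ : ∀ j, 0 ≤ x j) (hxF : ∀ j : ℕ, F (x j) = 1 / (((j + 1 : ℕ) : ℝ) + 1))
    {t : ℝ} (ht : 0 ≤ t) (hFt₀ : 0 < F t) (hFt₁ : F t ≤ 1) :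
    ∃ j : ℕ, F t ≤ 1 / ((j : ℝ) + 1) ∧ t < x j := by
  obtain ⟨j, hj⟩ : ∃ j : ℕ, ⌊(F t)⁻¹⌋₊ = j + 1 :=
    Nat.exists_eq_add_one.2 (Nat.floor_pos.2 (one_le_inv₀ hFt₀ |>.2 hFt₁))
  have hle : ((j : ℝ) + 1) ≤ (F t)⁻¹ := by exact_mod_cast hj ▸ Nat.floor_le (inv_nonneg.2 hFt₀.le)
  have hlt : (F t)⁻¹ < (j : ℝ) + 1 + 1 := by exact_mod_cast hj ▸ Nat.lt_floor_add_one (F t)⁻¹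
  refine ⟨j, ?_, ?_⟩
  · rwa [le_inv_comm₀ (by positivity) hFt₀, ← one_div] at hle
  · by_contra! hxt
    have := hF.antitoneOn (hx₀ j) ht hxt
    rw [hxF, Nat.cast_succ, one_div, le_inv_comm₀ hFt₀ (by positivity)] at this
    exact this.not_gt hlt

theorem fdrs_arbitrarily_slow_convergence_general
    (a : ℝ) (ha : 0 ≤ a)
    (F : ℝ → ℝ)
    (hF01 : ∀ x : ℝ, 0 ≤ x → F x ∈ Set.Ioo (0 : ℝ) 1)
    (hFanti : StrictAntiOn F (Set.Ici 0))
    (hFrange : ∀ j : ℕ, 1 ≤ j → ∃ x : ℝ, 0 ≤ x ∧ F x = 1 / (j + 1)) :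
    ∃ θ : ℕ → ℝ, (∀ i, θ i ∈ Set.Ioc (0 : ℝ) (Real.pi / 2)) ∧
    ∃ T : SlowH →L[ℝ] SlowH,
      -- T is the associated block operator:
      (∀ z : SlowH, ∀ i : ℕ,
        (T z) i 0 = -(Real.sin (θ i) * Real.cos (θ i) / (a + 1)) * (z i 1) ∧
        (T z) i 1 = ((Real.cos (θ i) ^ 2 + a) / (a + 1)) * (z i 1)) ∧
      -- (i) U ∩ V = {0}
      (∀ z : SlowH,
        (∀ i : ℕ, ∃ r : ℝ, z i 0 = r * Real.cos (θ i) ∧ z i 1 = r * Real.sin (θ i)) →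
        (∀ i : ℕ, z i 1 = 0) → z = 0) ∧
      -- (ii) 0 is the unique fixed point of T
      (T 0 = 0 ∧ ∀ z : SlowH, T z = z → z = 0) ∧
      -- (iii), (iv): there is an initial point whose orbit converges strongly to 0,
      -- but no faster than e⁻¹ F(k)
      ∃ z0 : SlowH,
        Tendsto (fun k : ℕ => (⇑T)^[k] z0) atTop (nhds (0 : SlowH)) ∧
        ∀ k : ℕ, 1 ≤ k → Real.exp (-1) * F k ≤ ‖(⇑T)^[k] z0‖ := by
  choose x hx₀ hxF using fun j : ℕ => hFrange (j + 1) (Nat.le_add_left 1 j)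
  have hR (j : ℕ) : 0 < x j + 1 := by linarith [hx₀ j]
  set θ : ℕ → ℝ := fun j => slowAngle (x j + 1)
  have hθ (j : ℕ) : θ j ∈ Ioc 0 (π / 2) := slowAngle_mem_Ioc (hR j)
  have hsin (j : ℕ) : sin (θ j) ≠ 0 :=
    (sin_pos_of_pos_of_lt_pi (hθ j).1 ((hθ j).2.trans_lt (half_lt_self pi_pos))).ne'
  set T := fdrsOperator a ha θ
  refine ⟨θ, hθ, T, fun z i => ⟨fdrsBlock_apply_zero _, fdrsBlock_apply_one _⟩,
    fun _ => SlowH.eq_zero_of_mem_U_of_mem_V hsin, ⟨map_zero T, fun _ =>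
    eq_zero_of_fdrsOperator_apply_eq_self ha hsin⟩, harmonicPoint,
    tendsto_fdrsOperator_iterate ha hsin _, fun k _ => ?_⟩
  have hFk := hF01 k k.cast_nonneg
  obtain ⟨j, hFj, hkj⟩ :=
    hFanti.exists_le_one_div_succ_and_lt hx₀ hxF k.cast_nonneg hFk.1 hFk.2.le
  calc exp (-1) * F k ≤ fdrsRate a (θ j) ^ k * (1 / ((j : ℝ) + 1)) :=
        mul_le_mul (exp_neg_one_le_fdrsRate_pow ha (hR j) (cos_slowAngle_sq (hR j).le) (by linarith))
          hFj hFk.1.le (pow_nonneg (fdrsRate_nonneg ha) k)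
    _ = T^[k] harmonicPoint j 1 := (fdrsOperator_iterate_harmonicPoint_apply_one ha θ k j).symm
    _ ≤ ‖T^[k] harmonicPoint‖ := (Real.le_norm_self _).trans <|
        (PiLp.norm_apply_le _ 1).trans (lp.norm_apply_le_norm two_ne_zero _ j)

/-- arbitrarily slow convergence of FDRS. -/
theorem fdrs_arbitrarily_slow_convergence
    (a : ℝ) (ha : 0 ≤ a)
    (F : ℝ → ℝ)
    (hF01 : ∀ x : ℝ, 0 ≤ x → F x ∈ Set.Ioo (0 : ℝ) 1)
    (hFanti : StrictAntiOn F (Set.Ici 0))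
    (hFzero : Tendsto F atTop (nhds 0))
    (hFrange : ∀ j : ℕ, 1 ≤ j → ∃ x : ℝ, 0 ≤ x ∧ F x = 1 / (j + 1)) :
    ∃ θ : ℕ → ℝ, (∀ i, θ i ∈ Set.Ioc (0 : ℝ) (Real.pi / 2)) ∧
    ∃ T : SlowH →L[ℝ] SlowH,
      -- T is the associated block operator:
      (∀ z : SlowH, ∀ i : ℕ,
        (T z) i 0 = -(Real.sin (θ i) * Real.cos (θ i) / (a + 1)) * (z i 1) ∧
        (T z) i 1 = ((Real.cos (θ i) ^ 2 + a) / (a + 1)) * (z i 1)) ∧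
      -- (i) U ∩ V = {0}
      (∀ z : SlowH,
        (∀ i : ℕ, ∃ r : ℝ, z i 0 = r * Real.cos (θ i) ∧ z i 1 = r * Real.sin (θ i)) →
        (∀ i : ℕ, z i 1 = 0) → z = 0) ∧
      -- (ii) 0 is the unique fixed point of T
      (T 0 = 0 ∧ ∀ z : SlowH, T z = z → z = 0) ∧
      -- (iii), (iv): there is an initial point whose orbit converges strongly to 0,
      -- but no faster than e⁻¹ F(k)
      ∃ z0 : SlowH,
        Tendsto (fun k : ℕ => (⇑T)^[k] z0) atTop (nhds (0 : SlowH)) ∧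
        ∀ k : ℕ, 1 ≤ k → Real.exp (-1) * F k ≤ ‖(⇑T)^[k] z0‖ :=
  fdrs_arbitrarily_slow_convergence_general a ha F hF01 hFanti hFrange
end

section
/- (No linear convergence of the shadow sequences.) Let a ≥ 0 and take the angles θ_i defined by cos²(θ_i) = i/(i+1) for i ≥ 0. Then, with T the associated block operator on H: for every initial point the sequences x_h^k := P_V(T^k z⁰) and x_f^k := (T − P_{V⊥})(T^k z⁰) converge strongly to 0, but they do not converge linearly; precisely, for every α > 1/2 there exists z⁰ ∈ H such that for all k ≥ 1: ‖x_h^k‖² ≥ 1/(k+1)^{2α} and ‖x_f^k‖² ≥ (a + 1/2)² / ((a+1)²(k+1)^{2α}). -/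
open Filter

lemma slow_normsq_eq (w : SlowH) : ‖w‖^2 = ∑' i, ((w i 0)^2 + (w i 1)^2) := by
  have h := lp.norm_rpow_eq_tsum (p := 2) (by norm_num) w
  simp only [ENNReal.toReal_ofNat] at h
  rw [show ((2:ℝ)) = ((2:ℕ):ℝ) by norm_num] at h
  simp only [Real.rpow_natCast] at h
  rw [h]
  congr 1; funext i
  rw [EuclideanSpace.norm_eq]
  rw [Real.sq_sqrt (by positivity)]
  simp [Fin.sum_univ_two, Real.norm_eq_abs, sq_abs]

lemma slow_summable_coords (w : SlowH) :
    Summable (fun i => ((w i 0)^2 + (w i 1)^2)) := by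
  have h := ((lp.memℓp w).summable (p := 2) (by norm_num))
  simp only [ENNReal.toReal_ofNat] at h
  rw [show ((2:ℝ)) = ((2:ℕ):ℝ) by norm_num] at h
  simp only [Real.rpow_natCast] at h
  refine h.congr fun i => ?_
  rw [EuclideanSpace.norm_eq, Real.sq_sqrt (by positivity)]
  simp [Fin.sum_univ_two, Real.norm_eq_abs, sq_abs]

lemma pow_ratio_ge (k : ℕ) (hk : 1 ≤ k) : (1:ℝ)/3 ≤ ((k:ℝ)/((k:ℝ)+1))^k := by
  have hk' : (1:ℝ) ≤ (k:ℝ) := by exact_mod_cast hk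
  have hkpos : (0:ℝ) < k := by linarith
  have h1 : ((k:ℝ)+1)/(k:ℝ) ≤ Real.exp (1/(k:ℝ)) := by
    have : 1 + 1/(k:ℝ) ≤ Real.exp (1/(k:ℝ)) := by linarith [Real.add_one_le_exp (1/(k:ℝ))]
    calc ((k:ℝ)+1)/(k:ℝ) = 1 + 1/(k:ℝ) := by field_simp
    _ ≤ _ := this
  have h2 : (((k:ℝ)+1)/(k:ℝ))^k ≤ Real.exp 1 := by
    calc (((k:ℝ)+1)/(k:ℝ))^k ≤ (Real.exp (1/(k:ℝ)))^k := by
          apply pow_le_pow_left₀ (by positivity) h1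
    _ = Real.exp ((1/(k:ℝ)) * k) := by rw [← Real.exp_nat_mul]; ring_nf
    _ = Real.exp 1 := by rw [one_div, inv_mul_cancel₀ hkpos.ne']
  have h3 : Real.exp 1 ≤ 3 := by linarith [Real.exp_one_lt_d9]
  have h4 : (((k:ℝ)+1)/(k:ℝ))^k ≤ 3 := h2.trans h3
  have h5 : (0:ℝ) < (((k:ℝ)+1)/(k:ℝ))^k := by positivity
  have heq : ((k:ℝ)/((k:ℝ)+1))^k = ((((k:ℝ)+1)/(k:ℝ))^k)⁻¹ := by
    rw [← inv_pow]; congr 1; rw [inv_div]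
  rw [heq, div_eq_mul_inv, one_mul]
  exact inv_anti₀ h5 h4

set_option maxHeartbeats 2000000 in
/-- no linear convergence of the FDRS shadow sequences. -/
theorem fdrs_shadow_sequences_no_linear_convergence
    (a : ℝ) (ha : 0 ≤ a)
    (θ : ℕ → ℝ) (hθ : ∀ i, θ i ∈ Set.Ioc (0 : ℝ) (Real.pi / 2))
    (hcos : ∀ i : ℕ, Real.cos (θ i) ^ 2 = (i : ℝ) / ((i : ℝ) + 1))
    -- T is the associated block operator and PV the projection onto V
    (T PV : SlowH →L[ℝ] SlowH)
    (hT : ∀ z : SlowH, ∀ i : ℕ,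
      (T z) i 0 = -(Real.sin (θ i) * Real.cos (θ i) / (a + 1)) * (z i 1) ∧
      (T z) i 1 = ((Real.cos (θ i) ^ 2 + a) / (a + 1)) * (z i 1))
    (hPV : ∀ z : SlowH, ∀ i : ℕ, (PV z) i 0 = z i 0 ∧ (PV z) i 1 = 0) :
    -- the shadow sequences converge strongly to 0 for every initial point ...
    (∀ z0 : SlowH,
      Tendsto (fun k : ℕ => PV ((⇑T)^[k] z0)) atTop (nhds (0 : SlowH)) ∧
      Tendsto (fun k : ℕ => T ((⇑T)^[k] z0) - ((⇑T)^[k] z0 - PV ((⇑T)^[k] z0)))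
        atTop (nhds (0 : SlowH))) ∧
    -- ... but not linearly:
    ∀ α : ℝ, 1 / 2 < α → ∃ z0 : SlowH, ∀ k : ℕ, 1 ≤ k →
      1 / ((k : ℝ) + 1) ^ (2 * α) ≤ ‖PV ((⇑T)^[k] z0)‖ ^ 2 ∧
      (a + 1 / 2) ^ 2 / ((a + 1) ^ 2 * ((k : ℝ) + 1) ^ (2 * α))
        ≤ ‖T ((⇑T)^[k] z0) - ((⇑T)^[k] z0 - PV ((⇑T)^[k] z0))‖ ^ 2 := by
  have ha1 : (0:ℝ) < a + 1 := by linarith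
  obtain ⟨l, hl⟩ : ∃ l : ℕ → ℝ, ∀ i, l i = (Real.cos (θ i)^2 + a)/(a+1) :=
    ⟨_, fun _ => rfl⟩
  obtain ⟨m, hm⟩ : ∃ m : ℕ → ℝ, ∀ i, m i = Real.sin (θ i) * Real.cos (θ i)/(a+1) :=
    ⟨_, fun _ => rfl⟩
  have hTz1 : ∀ (z : SlowH) (i : ℕ), (T z) i 1 = l i * z i 1 := by
    intro z i; rw [hl]; exact (hT z i).2
  have hTz0 : ∀ (z : SlowH) (i : ℕ), (T z) i 0 = -(m i) * z i 1 := by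
    intro z i; rw [hm]; exact (hT z i).1
  have hipos : ∀ i : ℕ, (0:ℝ) < (i:ℝ) + 1 := fun i => by positivity
  have hcos01 : ∀ i, 0 ≤ Real.cos (θ i)^2 ∧ Real.cos (θ i)^2 < 1 := by
    intro i
    rw [hcos i]
    constructor
    · positivity
    · rw [div_lt_one (hipos i)]; linarith
  have hl0 : ∀ i, 0 ≤ l i := by
    intro i; rw [hl]
    have := (hcos01 i).1
    positivity
  have hl1 : ∀ i, l i < 1 := by
    intro i; rw [hl, div_lt_one ha1]; linarith [(hcos01 i).2]
  have hlle : ∀ i, l i ≤ 1 := fun i => (hl1 i).le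
  have hsin2 : ∀ i : ℕ, Real.sin (θ i)^2 = 1/((i:ℝ)+1) := by
    intro i
    have h := Real.sin_sq_add_cos_sq (θ i)
    rw [hcos i] at h
    have hi := (hipos i).ne'
    field_simp at h ⊢
    linarith
  have hm2 : ∀ i : ℕ, m i^2 = ((i:ℝ)/(((i:ℝ)+1)^2))/((a+1)^2) := by
    intro i
    rw [hm, div_pow, mul_pow, hsin2 i, hcos i]
    congr 1
    rw [div_mul_div_comm, one_mul, sq]
  have hm2le1 : ∀ i : ℕ, m i^2 ≤ 1 := by
    intro i
    have hx : (0:ℝ) ≤ i := Nat.cast_nonneg i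
    have h1 : (i:ℝ) ≤ ((i:ℝ)+1)^2 := by nlinarith
    have h2 : ((i:ℝ)+1)^2 ≤ ((i:ℝ)+1)^2*(a+1)^2 := by
      have := mul_le_mul_of_nonneg_left (show (1:ℝ) ≤ (a+1)^2 by nlinarith)
        (sq_nonneg ((i:ℝ)+1))
      linarith
    rw [hm2, div_div, div_le_one (by positivity)]
    linarith
  have h1l : ∀ i : ℕ, 1 - l i = (1/((i:ℝ)+1))/(a+1) := by
    intro i
    rw [hl, hcos i]
    have hi := (hipos i).ne'
    field_simp
    ring
  have hlge : ∀ i : ℕ, (i:ℝ)/((i:ℝ)+1) ≤ l i := by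
    intro i
    have hx0 : (0:ℝ) ≤ (i:ℝ)/((i:ℝ)+1) := by positivity
    have hx1 : (i:ℝ)/((i:ℝ)+1) ≤ 1 := by
      rw [div_le_one (hipos i)]; linarith
    rw [hl, hcos i, le_div_iff₀ ha1]
    nlinarith [mul_le_mul_of_nonneg_right hx1 ha]
  -- iteration formulas
  have hiter1 : ∀ (z : SlowH) (i : ℕ) (k : ℕ), ((⇑T)^[k] z) i 1 = (l i)^k * z i 1 := by
    intro z i k
    induction k with
    | zero => simp
    | succ n ih =>
        rw [Function.iterate_succ_apply', hTz1, ih, pow_succ]; ring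
  have hiter0 : ∀ (z : SlowH) (i : ℕ) (k : ℕ),
      ((⇑T)^[k+1] z) i 0 = -(m i) * ((l i)^k * z i 1) := by
    intro z i k
    rw [Function.iterate_succ_apply', hTz0, hiter1]
  have hsub : ∀ (u v : SlowH) (i : ℕ) (j : Fin 2), (u - v) i j = u i j - v i j := by
    intro u v i j; rw [lp.coeFn_sub]; rfl
  -- coordinates of the second shadow sequence
  have hXcoords : ∀ (z : SlowH) (k : ℕ) (i : ℕ),
      (T ((⇑T)^[k] z) - ((⇑T)^[k] z - PV ((⇑T)^[k] z))) i 0 = -(m i) * ((l i)^k * z i 1) ∧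
      (T ((⇑T)^[k] z) - ((⇑T)^[k] z - PV ((⇑T)^[k] z))) i 1 = (l i - 1) * ((l i)^k * z i 1) := by
    intro z k i
    constructor
    · rw [hsub, hsub, hTz0, hiter1, (hPV _ i).1]; ring
    · rw [hsub, hsub, hTz1, hiter1, (hPV _ i).2]; ring
  -- normsq coordinates of the shadows
  have hnormh : ∀ (z : SlowH) (k : ℕ) (i : ℕ),
      ((PV ((⇑T)^[k+1] z)) i 0)^2 + ((PV ((⇑T)^[k+1] z)) i 1)^2
        = m i^2 * ((l i)^k * z i 1)^2 := by
    intro z k i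
    rw [(hPV _ i).1, (hPV _ i).2, hiter0]; ring
  have hnormf : ∀ (z : SlowH) (k : ℕ) (i : ℕ),
      ((T ((⇑T)^[k] z) - ((⇑T)^[k] z - PV ((⇑T)^[k] z))) i 0)^2 +
      ((T ((⇑T)^[k] z) - ((⇑T)^[k] z - PV ((⇑T)^[k] z))) i 1)^2
        = (m i^2 + (1 - l i)^2) * ((l i)^k * z i 1)^2 := by
    intro z k i
    rw [(hXcoords z k i).1, (hXcoords z k i).2]; ring
  constructor
  · -- convergence
    intro z0
    constructor
    · -- x_h → 0
      rw [tendsto_zero_iff_norm_tendsto_zero]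
      have key : Tendsto (fun k => ‖PV ((⇑T)^[k] z0)‖^2) atTop (nhds 0) := by
        rw [show (0:ℝ) = ∑' (_:ℕ), (0:ℝ) from tsum_zero.symm]
        simp only [slow_normsq_eq]
        apply tendsto_tsum_of_dominated_convergence
          (bound := fun i => (z0 i 0)^2 + (z0 i 1)^2)
        · exact slow_summable_coords z0
        · intro i
          apply (tendsto_add_atTop_iff_nat 1).mp
          have heq : ∀ n : ℕ,
              ((PV ((⇑T)^[n+1] z0)) i 0)^2 + ((PV ((⇑T)^[n+1] z0)) i 1)^2
                = (m i^2 * (z0 i 1)^2) * ((l i)^2)^n := by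
            intro n; rw [hnormh]; ring
          simp only [heq]
          have hlt : (l i)^2 < 1 := by nlinarith [hl0 i, hl1 i]
          have := (tendsto_pow_atTop_nhds_zero_of_lt_one (by positivity) hlt).const_mul
            (m i^2 * (z0 i 1)^2)
          simpa using this
        · filter_upwards with k
          intro i
          rw [Real.norm_eq_abs, abs_of_nonneg (by positivity)]
          cases k with
          | zero =>
              simp only [Function.iterate_zero_apply, (hPV z0 i).1, (hPV z0 i).2]
              nlinarith [sq_nonneg (z0 i 1)]
          | succ n =>
              rw [hnormh z0 n i]
              have h1 : (l i)^n ≤ 1 := pow_le_one₀ (hl0 i) (hlle i)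
              have h2 : (0:ℝ) ≤ (l i)^n := pow_nonneg (hl0 i) n
              have h3 : ((l i)^n)^2 ≤ 1 := by nlinarith
              have h5 : ((l i)^n * z0 i 1)^2 ≤ (z0 i 1)^2 := by
                rw [mul_pow]
                calc ((l i)^n)^2 * (z0 i 1)^2 ≤ 1 * (z0 i 1)^2 :=
                      mul_le_mul_of_nonneg_right h3 (sq_nonneg _)
                _ = (z0 i 1)^2 := one_mul _
              nlinarith [hm2le1 i, sq_nonneg (z0 i 0), sq_nonneg ((l i)^n * z0 i 1)]
      have h2 := key.sqrt
      rw [Real.sqrt_zero] at h2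
      exact h2.congr fun k => Real.sqrt_sq (norm_nonneg _)
    · -- x_f → 0
      rw [tendsto_zero_iff_norm_tendsto_zero]
      have key : Tendsto
          (fun k => ‖T ((⇑T)^[k] z0) - ((⇑T)^[k] z0 - PV ((⇑T)^[k] z0))‖^2)
          atTop (nhds 0) := by
        rw [show (0:ℝ) = ∑' (_:ℕ), (0:ℝ) from tsum_zero.symm]
        simp only [slow_normsq_eq]
        apply tendsto_tsum_of_dominated_convergence
          (bound := fun i => 2*((z0 i 0)^2 + (z0 i 1)^2))
        · exact (slow_summable_coords z0).mul_left 2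
        · intro i
          have heq : ∀ k : ℕ,
              ((T ((⇑T)^[k] z0) - ((⇑T)^[k] z0 - PV ((⇑T)^[k] z0))) i 0)^2 +
              ((T ((⇑T)^[k] z0) - ((⇑T)^[k] z0 - PV ((⇑T)^[k] z0))) i 1)^2
                = ((m i^2 + (1 - l i)^2) * (z0 i 1)^2) * ((l i)^2)^k := by
            intro k; rw [hnormf]; ring
          simp only [heq]
          have hlt : (l i)^2 < 1 := by nlinarith [hl0 i, hl1 i]
          have := (tendsto_pow_atTop_nhds_zero_of_lt_one (by positivity) hlt).const_mul
            ((m i^2 + (1 - l i)^2) * (z0 i 1)^2)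
          simpa using this
        · filter_upwards with k
          intro i
          rw [Real.norm_eq_abs, abs_of_nonneg (by positivity)]
          rw [hnormf z0 k i]
          have h1 : (l i)^k ≤ 1 := pow_le_one₀ (hl0 i) (hlle i)
          have h2 : (0:ℝ) ≤ (l i)^k := pow_nonneg (hl0 i) k
          have h3 : ((l i)^k)^2 ≤ 1 := by nlinarith
          have h5 : ((l i)^k * z0 i 1)^2 ≤ (z0 i 1)^2 := by
            rw [mul_pow]
            calc ((l i)^k)^2 * (z0 i 1)^2 ≤ 1 * (z0 i 1)^2 :=
                  mul_le_mul_of_nonneg_right h3 (sq_nonneg _)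
            _ = (z0 i 1)^2 := one_mul _
          have h6 : (1 - l i)^2 ≤ 1 := by nlinarith [hl0 i, hlle i]
          nlinarith [hm2le1 i, sq_nonneg (z0 i 0), sq_nonneg ((l i)^k * z0 i 1),
            sq_nonneg (1 - l i), sq_nonneg (m i)]
      have h2 := key.sqrt
      rw [Real.sqrt_zero] at h2
      exact h2.congr fun k => Real.sqrt_sq (norm_nonneg _)
  · -- no linear convergence
    intro α hα
    have h2a : (1:ℝ) < 2*α := by linarith
    have hQ : (0:ℝ) < (2:ℝ)^(2*α) := Real.rpow_pos_of_pos (by norm_num) _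
    set c : ℝ := 36*(a+1)^2 * (2:ℝ)^(2*α) with hc
    have hcpos : 0 < c := by positivity
    obtain ⟨t, ht⟩ : ∃ t : ℕ → ℝ, ∀ i, t i = Real.sqrt c * ((i:ℝ)+1)^(-α) :=
      ⟨_, fun _ => rfl⟩
    have ht0 : ∀ i, 0 ≤ t i := by
      intro i; rw [ht]; positivity
    have ht2 : ∀ i, t i^2 = c * ((i:ℝ)+1)^(-(2*α)) := by
      intro i
      rw [ht, mul_pow, Real.sq_sqrt hcpos.le]
      congr 1
      rw [← Real.rpow_natCast (((i:ℝ)+1)^(-α)) 2, ← Real.rpow_mul (by positivity)]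
      norm_num
      ring_nf
    have htsum : Summable (fun i => t i^2) := by
      have hs0 : Summable (fun n : ℕ => (((n:ℝ))^(2*α))⁻¹) :=
        Real.summable_nat_rpow_inv.mpr h2a
      have hs1 : Summable (fun n : ℕ => ((((n:ℕ):ℝ)+1)^(2*α))⁻¹) := by
        have := (summable_nat_add_iff 1).mpr hs0
        refine this.congr fun n => ?_
        push_cast
        ring_nf
      refine ((hs1.mul_left c).congr fun i => ?_)
      rw [ht2, Real.rpow_neg (by positivity)]
    have hmem : Memℓp
        (fun i : ℕ => ((WithLp.equiv 2 (Fin 2 → ℝ)).symm ![0, t i] : EuclideanSpace ℝ (Fin 2))) 2 := by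
      apply memℓp_gen
      simp only [ENNReal.toReal_ofNat]
      rw [show ((2:ℝ)) = ((2:ℕ):ℝ) by norm_num]
      simp only [Real.rpow_natCast]
      refine htsum.congr fun i => ?_
      rw [EuclideanSpace.norm_eq, Real.sq_sqrt (by positivity)]
      simp [Fin.sum_univ_two, Real.norm_eq_abs, sq_abs]
    obtain ⟨z0, hz00, hz01⟩ :
        ∃ z0 : SlowH, (∀ i, z0 i 0 = 0) ∧ (∀ i, z0 i 1 = t i) := by
      refine ⟨⟨_, hmem⟩, fun i => ?_, fun i => ?_⟩
      · show ((WithLp.equiv 2 (Fin 2 → ℝ)).symm ![0, t i]) 0 = 0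
        simp
      · show ((WithLp.equiv 2 (Fin 2 → ℝ)).symm ![0, t i]) 1 = t i
        simp
    refine ⟨z0, ?_⟩
    intro k hk
    obtain ⟨n, rfl⟩ : ∃ n, k = n + 1 := ⟨k-1, (Nat.succ_pred_eq_of_pos hk).symm⟩
    set K : ℝ := (n:ℝ) + 2 with hK
    have hKpos : (0:ℝ) < K := by rw [hK]; positivity
    have hP : (0:ℝ) < K^(2*α) := Real.rpow_pos_of_pos hKpos _
    have hKK : ((↑(n+1):ℝ)) + 1 = K := by rw [hK]; push_cast; ring
    have hQi : (0:ℝ) ≤ ((2:ℝ)^(2*α))⁻¹ := inv_nonneg.mpr hQ.le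
    have hPi : (0:ℝ) ≤ (K^(2*α))⁻¹ := inv_nonneg.mpr hP.le
    have hApos : (0:ℝ) ≤ c * ((2:ℝ)^(2*α))⁻¹ * (K^(2*α))⁻¹ :=
      mul_nonneg (mul_nonneg hcpos.le hQi) hPi
    have hS : ∀ i ∈ Finset.Icc (n+1) (2*(n+1)),
        ((n:ℝ)+1 ≤ (i:ℝ) ∧ (i:ℝ) + 1 ≤ 2*K) := by
      intro i hi
      rw [Finset.mem_Icc] at hi
      constructor
      · exact_mod_cast hi.1
      · have h : (i:ℝ) ≤ 2*((n:ℝ)+1) := by exact_mod_cast hi.2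
        rw [hK]; linarith
    have hcard : ((Finset.Icc (n+1) (2*(n+1))).card : ℝ) = K := by
      rw [Nat.card_Icc]
      rw [show 2*(n+1) + 1 - (n+1) = n + 2 by omega]
      rw [hK]; push_cast; ring
    -- common bounds for i in the window
    have hA : ∀ i ∈ Finset.Icc (n+1) (2*(n+1)),
        c * ((2:ℝ)^(2*α))⁻¹ * (K^(2*α))⁻¹ ≤ t i^2 := by
      intro i hi
      obtain ⟨hi1, hi2⟩ := hS i hi
      rw [ht2]
      have h1 : ((2:ℝ)*K)^(-(2*α)) ≤ ((i:ℝ)+1)^(-(2*α)) :=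
        Real.rpow_le_rpow_of_nonpos (by positivity) hi2 (by linarith)
      have h2 : ((2:ℝ)*K)^(-(2*α)) = (2:ℝ)^(-(2*α)) * K^(-(2*α)) :=
        Real.mul_rpow (by norm_num) hKpos.le
      calc c * ((2:ℝ)^(2*α))⁻¹ * (K^(2*α))⁻¹
          = c * (((2:ℝ)*K)^(-(2*α))) := by
            rw [h2, Real.rpow_neg (by norm_num), Real.rpow_neg hKpos.le]; ring
      _ ≤ c * (((i:ℝ)+1)^(-(2*α))) := by
            exact mul_le_mul_of_nonneg_left h1 hcpos.le
    have hBnum : ∀ i ∈ Finset.Icc (n+1) (2*(n+1)),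
        1/(2*K) ≤ 1/((i:ℝ)+1) := by
      intro i hi
      obtain ⟨hi1, hi2⟩ := hS i hi
      apply one_div_le_one_div_of_le (by positivity) hi2
    have hB : ∀ i ∈ Finset.Icc (n+1) (2*(n+1)),
        1/(4*K*(a+1)^2) ≤ m i^2 := by
      intro i hi
      obtain ⟨hi1, hi2⟩ := hS i hi
      have hi1' : (1:ℝ) ≤ (i:ℝ) := by
        have : (0:ℝ) ≤ (n:ℝ) := Nat.cast_nonneg n
        linarith
      rw [hm2]
      have hx : 1/(4*K) ≤ (i:ℝ)/(((i:ℝ)+1)^2) := by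
        rw [div_le_div_iff₀ (by linarith) (by positivity)]
        have hA1 : ((i:ℝ)+1)*((i:ℝ)+1) ≤ 2*K*((i:ℝ)+1) :=
          mul_le_mul_of_nonneg_right hi2 (by positivity)
        have hA2 : 2*K*((i:ℝ)+1) ≤ 2*K*(2*(i:ℝ)) :=
          mul_le_mul_of_nonneg_left (by linarith) (by linarith)
        nlinarith
      calc 1/(4*K*(a+1)^2) = (1/(4*K))/((a+1)^2) := by rw [div_div]
      _ ≤ ((i:ℝ)/(((i:ℝ)+1)^2))/((a+1)^2) := by gcongr
    have hCbase : ∀ i ∈ Finset.Icc (n+1) (2*(n+1)), ((n:ℝ)+1)/K ≤ l i := by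
      intro i hi
      obtain ⟨hi1, hi2⟩ := hS i hi
      refine le_trans ?_ (hlge i)
      rw [hK, div_le_div_iff₀ (by positivity) (hipos i)]
      nlinarith [Nat.cast_nonneg i (α := ℝ)]
    have hC1 : (1/3:ℝ) ≤ (((n:ℝ)+1)/K)^(n+1) := by
      have h := pow_ratio_ge (n+1) (by omega)
      push_cast at h
      rw [hK, show (n:ℝ)+2 = (n:ℝ)+1+1 from by ring]
      exact h
    have hCn : ∀ i ∈ Finset.Icc (n+1) (2*(n+1)), (1/3:ℝ) ≤ (l i)^n := by
      intro i hi
      have hb0 : (0:ℝ) ≤ ((n:ℝ)+1)/K := by positivity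
      have hb1 : ((n:ℝ)+1)/K ≤ 1 := by
        rw [div_le_one hKpos, hK]; linarith
      have h2 : (((n:ℝ)+1)/K)^(n+1) ≤ (((n:ℝ)+1)/K)^n :=
        pow_le_pow_of_le_one hb0 hb1 (Nat.le_succ n)
      have h3 : (((n:ℝ)+1)/K)^n ≤ (l i)^n :=
        pow_le_pow_left₀ hb0 (hCbase i hi) n
      linarith [hC1]
    have hCn1 : ∀ i ∈ Finset.Icc (n+1) (2*(n+1)), (1/3:ℝ) ≤ (l i)^(n+1) := by
      intro i hi
      have hb0 : (0:ℝ) ≤ ((n:ℝ)+1)/K := by positivity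
      have h3 : (((n:ℝ)+1)/K)^(n+1) ≤ (l i)^(n+1) :=
        pow_le_pow_left₀ hb0 (hCbase i hi) (n+1)
      linarith [hC1]
    constructor
    · -- x_h lower bound
      have hrw : ∀ i, ((PV ((⇑T)^[n+1] z0)) i 0)^2 + ((PV ((⇑T)^[n+1] z0)) i 1)^2
          = m i^2 * ((l i)^n * t i)^2 := by
        intro i; rw [hnormh, hz01]
      have hsum : Summable (fun i => m i^2 * ((l i)^n * t i)^2) :=
        (slow_summable_coords _).congr hrw
      have heq : ‖PV ((⇑T)^[n+1] z0)‖^2 = ∑' i, m i^2 * ((l i)^n * t i)^2 := by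
        rw [slow_normsq_eq]; exact tsum_congr hrw
      rw [heq]
      have hterm : ∀ i ∈ Finset.Icc (n+1) (2*(n+1)),
          1/(K^(2*α) * K) ≤ m i^2 * ((l i)^n * t i)^2 := by
        intro i hi
        have hA' := hA i hi
        have hB' := hB i hi
        have hC' : (1/9:ℝ) ≤ ((l i)^n)^2 := by
          have := hCn i hi
          calc (1/9:ℝ) = (1/3)^2 := by norm_num
          _ ≤ ((l i)^n)^2 := by
                apply pow_le_pow_left₀ (by norm_num) this
        have hter : m i^2 * ((l i)^n * t i)^2 = m i^2 * (((l i)^n)^2 * (t i)^2) := by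
          ring
        rw [hter]
        have hprod : (1/(4*K*(a+1)^2)) * ((1/9) * (c * ((2:ℝ)^(2*α))⁻¹ * (K^(2*α))⁻¹))
            ≤ m i^2 * (((l i)^n)^2 * t i^2) := by
          apply mul_le_mul hB' ?_ (by nlinarith [hApos]) (sq_nonneg _)
          · exact mul_le_mul hC' hA' hApos (sq_nonneg _)
        refine le_trans (le_of_eq ?_) hprod
        rw [hc]
        field_simp
        ring
      calc 1/((↑(n+1):ℝ)+1)^(2*α) = 1/(K^(2*α)) := by rw [hKK]
      _ = K * (1/(K^(2*α) * K)) := by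
            field_simp
      _ = ((Finset.Icc (n+1) (2*(n+1))).card : ℝ) * (1/(K^(2*α) * K)) := by rw [hcard]
      _ ≤ ∑ i ∈ Finset.Icc (n+1) (2*(n+1)), m i^2 * ((l i)^n * t i)^2 := by
            rw [← nsmul_eq_mul]
            exact Finset.card_nsmul_le_sum _ _ _ hterm
      _ ≤ ∑' i, m i^2 * ((l i)^n * t i)^2 :=
            Summable.sum_le_tsum _ (fun i _ => by positivity) hsum
    · -- x_f lower bound
      have hrw : ∀ i,
          ((T ((⇑T)^[n+1] z0) - ((⇑T)^[n+1] z0 - PV ((⇑T)^[n+1] z0))) i 0)^2 +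
          ((T ((⇑T)^[n+1] z0) - ((⇑T)^[n+1] z0 - PV ((⇑T)^[n+1] z0))) i 1)^2
          = (m i^2 + (1 - l i)^2) * ((l i)^(n+1) * t i)^2 := by
        intro i; rw [hnormf, hz01]
      have hsum : Summable (fun i => (m i^2 + (1 - l i)^2) * ((l i)^(n+1) * t i)^2) :=
        (slow_summable_coords _).congr hrw
      have heq : ‖T ((⇑T)^[n+1] z0) - ((⇑T)^[n+1] z0 - PV ((⇑T)^[n+1] z0))‖^2
          = ∑' i, (m i^2 + (1 - l i)^2) * ((l i)^(n+1) * t i)^2 := by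
        rw [slow_normsq_eq]; exact tsum_congr hrw
      rw [heq]
      have hterm : ∀ i ∈ Finset.Icc (n+1) (2*(n+1)),
          2/(K^(2*α) * K) ≤ (m i^2 + (1 - l i)^2) * ((l i)^(n+1) * t i)^2 := by
        intro i hi
        have hA' := hA i hi
        have hB2 : 1/(2*K*(a+1)^2) ≤ m i^2 + (1 - l i)^2 := by
          have hsum2 : m i^2 + (1 - l i)^2 = (1/((i:ℝ)+1))/((a+1)^2) := by
            rw [hm2, h1l]
            have hi' := (hipos i).ne'
            field_simp
          rw [hsum2]
          have := hBnum i hi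
          calc 1/(2*K*(a+1)^2) = (1/(2*K))/((a+1)^2) := by rw [div_div]
          _ ≤ (1/((i:ℝ)+1))/((a+1)^2) := by gcongr
        have hC' : (1/9:ℝ) ≤ ((l i)^(n+1))^2 := by
          have := hCn1 i hi
          calc (1/9:ℝ) = (1/3)^2 := by norm_num
          _ ≤ ((l i)^(n+1))^2 := by
                apply pow_le_pow_left₀ (by norm_num) this
        have hter : (m i^2 + (1 - l i)^2) * ((l i)^(n+1) * t i)^2
            = (m i^2 + (1 - l i)^2) * (((l i)^(n+1))^2 * (t i)^2) := by ring
        rw [hter]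
        have hprod : (1/(2*K*(a+1)^2)) * ((1/9) * (c * ((2:ℝ)^(2*α))⁻¹ * (K^(2*α))⁻¹))
            ≤ (m i^2 + (1 - l i)^2) * (((l i)^(n+1))^2 * t i^2) := by
          apply mul_le_mul hB2 ?_ (by nlinarith [hApos]) (by positivity)
          exact mul_le_mul hC' hA' hApos (sq_nonneg _)
        refine le_trans (le_of_eq ?_) hprod
        rw [hc]
        field_simp
        ring
      have hub : (a + 1/2)^2/((a+1)^2 * (((↑(n+1):ℝ))+1)^(2*α)) ≤ 2/(K^(2*α)) := by
        rw [hKK]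
        rw [div_le_div_iff₀ (mul_pos (pow_pos ha1 2) hP) hP]
        have h1 : (a + 1/2)^2 ≤ (a+1)^2 := by nlinarith
        have h2 := mul_le_mul_of_nonneg_right h1 hP.le
        have h3 : (0:ℝ) ≤ (a+1)^2 * K^(2*α) := mul_nonneg (sq_nonneg _) hP.le
        nlinarith
      refine le_trans hub ?_
      calc (2:ℝ)/(K^(2*α)) = K * (2/(K^(2*α) * K)) := by
            field_simp
      _ = ((Finset.Icc (n+1) (2*(n+1))).card : ℝ) * (2/(K^(2*α) * K)) := by rw [hcard]
      _ ≤ ∑ i ∈ Finset.Icc (n+1) (2*(n+1)), (m i^2 + (1 - l i)^2) * ((l i)^(n+1) * t i)^2 := by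
            rw [← nsmul_eq_mul]
            exact Finset.card_nsmul_le_sum _ _ _ hterm
      _ ≤ ∑' i, (m i^2 + (1 - l i)^2) * ((l i)^(n+1) * t i)^2 :=
            Summable.sum_le_tsum _ (fun i _ => by positivity) hsum
end
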